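/- Let (G,·,∘) be a finite skew brace. If the number of characteristic subgroups of the group (G,·) equals the number of subgroups of the group (G,∘), then every subgroup of (G,∘) is a left ideal of (G,·,∘). -/

import Mathlib

def IsSkewBrace {G : Type*} (dot circ : Group G) : Prop :=
  ∀ σ τ κ : G,
    circ.mul σ (dot.mul τ κ) =
      dot.mul (dot.mul (circ.mul σ τ) (dot.inv σ)) (circ.mul σ κ)

def gammaFun {G : Type*} (dot circ : Group G) (σ τ : G) : G :=
  dot.mul (dot.inv σ) (circ.mul σ τ)

def IsSubgroupOf {G : Type*} (S : Group G) (H : Set G) : Prop :=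
  S.one ∈ H ∧ (∀ a ∈ H, ∀ b ∈ H, S.mul a b ∈ H) ∧ (∀ a ∈ H, S.inv a ∈ H)

def IsLeftIdeal {G : Type*} (dot circ : Group G) (H : Set G) : Prop :=
  IsSubgroupOf dot H ∧ ∀ σ : G, ∀ τ ∈ H, gammaFun dot circ σ τ ∈ H

def IsStrongLeftIdeal {G : Type*} (dot circ : Group G) (H : Set G) : Prop :=
  IsLeftIdeal dot circ H ∧
    ∀ σ : G, ∀ τ ∈ H, dot.mul (dot.mul σ τ) (dot.inv σ) ∈ H

def IsCharacteristicSubgroupOf {G : Type*} (S : Group G) (H : Set G) : Prop :=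
  IsSubgroupOf S H ∧
    ∀ f : G ≃ G, (∀ a b : G, f (S.mul a b) = S.mul (f a) (f b)) → ∀ a ∈ H, f a ∈ H

def oppGroup {G : Type*} (dot : Group G) : Group G :=
  letI := dot
  { mul := fun a b => b * a
    one := (1 : G)
    inv := fun a => a⁻¹
    npow := @npowRec G ⟨(1 : G)⟩ ⟨fun a b => b * a⟩
    npow_zero := fun _ => rfl
    npow_succ := fun _ _ => rfl
    zpow := @zpowRec G ⟨(1 : G)⟩ ⟨fun a b => b * a⟩ ⟨fun a => a⁻¹⟩
      (@npowRec G ⟨(1 : G)⟩ ⟨fun a b => b * a⟩)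
    zpow_zero' := fun _ => rfl
    zpow_succ' := fun _ _ => rfl
    zpow_neg' := fun _ _ => rfl
    div := fun a b => b⁻¹ * a
    div_eq_mul_inv := fun _ _ => rfl
    mul_assoc := fun a b c => (mul_assoc c b a).symm
    one_mul := fun a => mul_one a
    mul_one := fun a => one_mul a
    inv_mul_cancel := fun a => mul_inv_cancel a }

def lam {G : Type*} (S : Group G) (σ : G) : Equiv.Perm G :=
  letI := S; Equiv.mulLeft σ

def rho {G : Type*} (S : Group G) (σ : G) : Equiv.Perm G :=
  letI := S; Equiv.mulRight σ⁻¹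

/-!
Each `γ(σ) = λ_{σ⁻¹} ∘ λ^∘_σ` is an automorphism of `(G,·)`, so every characteristic subgroup of
`(G,·)` is a left ideal, and every left ideal is a subgroup of `(G,∘)`. The characteristic
subgroups thus form a subset of the finite set of subgroups of `(G,∘)`; equal cardinalities force
equality, so every subgroup of `(G,∘)` is characteristic in `(G,·)`, hence a left ideal.
-/

theorem imp_of_imp_of_card_subtype_eq {α : Type*} [Finite α] {p q : α → Prop}
    (hpq : ∀ a, p a → q a) (hcard : Nat.card {a // p a} = Nat.card {a // q a}) {a : α}
    (ha : q a) : p a := by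
  have hset : {a | p a} = {a | q a} :=
    Set.eq_of_subset_of_ncard_le hpq hcard.ge (Set.toFinite _)
  exact (Set.ext_iff.1 hset a).2 ha

section SkewBrace

variable {G : Type*} {dot circ : Group G}

theorem IsSkewBrace.circ_one_eq (h : IsSkewBrace dot circ) : circ.one = dot.one := by
  let _ : Group G := dot
  have key := h circ.one 1 1
  have circ_one_mul : ∀ x, circ.mul circ.one x = x := circ.one_mul
  change circ.mul circ.one ((1 : G) * 1) =
    circ.mul circ.one 1 * circ.one⁻¹ * circ.mul circ.one 1 at key
  rw [circ_one_mul, circ_one_mul, mul_one, one_mul, mul_one, eq_comm, inv_eq_one] at key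
  exact key

theorem IsSkewBrace.gammaFun_mul (h : IsSkewBrace dot circ) (σ τ κ : G) :
    gammaFun dot circ σ (dot.mul τ κ) =
      dot.mul (gammaFun dot circ σ τ) (gammaFun dot circ σ κ) := by
  unfold gammaFun
  rw [h σ τ κ]
  let _ : Group G := dot
  change σ⁻¹ * (circ.mul σ τ * σ⁻¹ * circ.mul σ κ) = σ⁻¹ * circ.mul σ τ * (σ⁻¹ * circ.mul σ κ)
  simp only [mul_assoc]

variable (dot circ) in
def gammaPerm (σ : G) : Equiv.Perm G := (lam circ σ).trans (lam dot (dot.inv σ))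

theorem circ_mul_eq_mul_gammaFun (σ τ : G) :
    circ.mul σ τ = dot.mul σ (gammaFun dot circ σ τ) := by
  let _ : Group G := dot
  exact (mul_inv_cancel_left σ (circ.mul σ τ)).symm

theorem IsSkewBrace.gammaFun_circ_inv_self (h : IsSkewBrace dot circ) (σ : G) :
    gammaFun dot circ (circ.inv σ) σ = dot.inv (circ.inv σ) := by
  have circ_inv_mul_self : circ.mul (circ.inv σ) σ = circ.one := circ.inv_mul_cancel σ
  unfold gammaFun
  rw [circ_inv_mul_self, h.circ_one_eq]
  exact dot.mul_one _

theorem IsSkewBrace.isLeftIdeal_of_isCharacteristicSubgroupOf (h : IsSkewBrace dot circ)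
    {H : Set G} (hH : IsCharacteristicSubgroupOf dot H) : IsLeftIdeal dot circ H :=
  ⟨hH.1, fun σ => hH.2 (gammaPerm dot circ σ) (h.gammaFun_mul σ)⟩

theorem IsLeftIdeal.isSubgroupOf_circ (h : IsSkewBrace dot circ) {H : Set G}
    (hH : IsLeftIdeal dot circ H) : IsSubgroupOf circ H := by
  obtain ⟨⟨hone, hmul, hinv⟩, hgamma⟩ := hH
  refine ⟨h.circ_one_eq ▸ hone, fun a ha b hb => ?_, fun a ha => ?_⟩
  · rw [circ_mul_eq_mul_gammaFun]
    exact hmul a ha _ (hgamma a b hb)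
  · have hinv_mem := hinv _ (h.gammaFun_circ_inv_self a ▸ hgamma (circ.inv a) a ha)
    let _ : Group G := dot
    simpa only [inv_inv] using hinv_mem

end SkewBrace

/-- For a finite skew brace `(G,·,∘)`, if the number of characteristic
subgroups of `(G,·)` equals the number of subgroups of `(G,∘)`, then every subgroup of
`(G,∘)` is a left ideal of `(G,·,∘)`. -/
theorem stmt15 {G : Type*} [Finite G] (dot circ : Group G) (h : IsSkewBrace dot circ)
    (hnum : Nat.card {H : Set G // IsCharacteristicSubgroupOf dot H} =
            Nat.card {H : Set G // IsSubgroupOf circ H}) :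
    ∀ H : Set G, IsSubgroupOf circ H → IsLeftIdeal dot circ H := by
  intro H hH
  have hchar_sub : ∀ K, IsCharacteristicSubgroupOf dot K → IsSubgroupOf circ K :=
    fun K hK => (h.isLeftIdeal_of_isCharacteristicSubgroupOf hK).isSubgroupOf_circ h
  exact h.isLeftIdeal_of_isCharacteristicSubgroupOf
    (imp_of_imp_of_card_subtype_eq hchar_sub hnum hH)
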